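/- arXiv:2407.11933 — 5 statements merged into one kernel-verified Lean document; each statement's English description precedes it below -/
import Mathlib

section
/- Let two groups A and B have positive/negative example counts (P_A, N_A) and (P_B, N_B), all positive reals, and suppose a classifier satisfies Equalized Odds with shared rates TPR, FPR ∈ [0,1]. If the group accuracies are equal (Accuracy Parity holds), i.e., (TPR·P_A + (1 - FPR)·N_A)/(P_A + N_A) = (TPR·P_B + (1 - FPR)·N_B)/(P_B + N_B), then either P_A/N_A = P_B/N_B (equal base rates) or TPR + FPR = 1 (random prediction). -/
theorem accuracy_parity_and_equalized_odds_impossibility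
    (TPR FPR PA NA PB NB : ℝ)
    (hTPR : 0 ≤ TPR ∧ TPR ≤ 1) (hFPR : 0 ≤ FPR ∧ FPR ≤ 1)
    (hPA : 0 < PA) (hNA : 0 < NA) (hPB : 0 < PB) (hNB : 0 < NB)
    (hAP : (TPR * PA + (1 - FPR) * NA) / (PA + NA)
         = (TPR * PB + (1 - FPR) * NB) / (PB + NB)) :
    PA / NA = PB / NB ∨ TPR + FPR = 1 := by
  have hA : PA + NA ≠ 0 := by positivity
  have hB : PB + NB ≠ 0 := by positivity
  have h := (div_eq_div_iff hA hB |>.mp hAP)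
  have key : (TPR + FPR - 1) * (PA * NB - PB * NA) = 0 := by nlinarith [h]
  rcases mul_eq_zero.mp key with h1 | h2
  · right; linarith
  · left
    rw [div_eq_div_iff hNA.ne' hNB.ne']
    nlinarith [h2]
end

section
/- Suppose two groups share TPR and FPR (Equalized Odds) with TPR > 1 - FPR, and have positive counts (P_A, N_A), (P_B, N_B) with strictly larger base rate for A: P_A/N_A > P_B/N_B. Then group A has strictly higher accuracy: (TPR·P_A + (1-FPR)·N_A)/(P_A+N_A) > (TPR·P_B + (1-FPR)·N_B)/(P_B+N_B). -/
theorem higher_base_rate_higher_accuracy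
    (TPR FPR PA NA PB NB : ℝ)
    (hTPR : 0 ≤ TPR ∧ TPR ≤ 1) (hFPR : 0 ≤ FPR ∧ FPR ≤ 1)
    (hPA : 0 < PA) (hNA : 0 < NA) (hPB : 0 < PB) (hNB : 0 < NB)
    (hT : TPR > 1 - FPR)
    (hbase : PA / NA > PB / NB) :
    (TPR * PA + (1 - FPR) * NA) / (PA + NA)
      > (TPR * PB + (1 - FPR) * NB) / (PB + NB) := by
  rw [gt_iff_lt, div_lt_div_iff₀ (by positivity) (by positivity)]
  rw [gt_iff_lt, div_lt_div_iff₀ hNB hNA] at hbase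
  nlinarith [mul_pos hPA hNB, mul_pos hPB hNA]
end

section
/- Let two groups under Equalized Odds have shared TPR, FPR ∈ (0,1) and counts (P_A, N_A), (P_B, N_B), all positive. If P_A/N_A > P_B/N_B, then the fraction of group B's predicted positives that are false positives, FPR·N_B/(TPR·P_B + FPR·N_B), is strictly larger than the corresponding fraction FPR·N_A/(TPR·P_A + FPR·N_A) for group A (i.e., the lower-base-rate group has strictly lower precision). -/
theorem lower_base_rate_higher_false_discovery
    (TPR FPR PA NA PB NB : ℝ)
    (hTPR : 0 < TPR ∧ TPR < 1) (hFPR : 0 < FPR ∧ FPR < 1)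
    (hPA : 0 < PA) (hNA : 0 < NA) (hPB : 0 < PB) (hNB : 0 < NB)
    (hbase : PA / NA > PB / NB) :
    FPR * NB / (TPR * PB + FPR * NB) > FPR * NA / (TPR * PA + FPR * NA) := by
  obtain ⟨hT, _⟩ := hTPR
  obtain ⟨hF, _⟩ := hFPR
  have hdA : 0 < TPR * PA + FPR * NA := by positivity
  have hdB : 0 < TPR * PB + FPR * NB := by positivity
  rw [gt_iff_lt, div_lt_div_iff₀ hdA hdB]
  have h : PB * NA < PA * NB := by
    rw [gt_iff_lt, div_lt_div_iff₀ hNB hNA] at hbase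
    linarith
  nlinarith [mul_pos hT hF, mul_pos (mul_pos hT hF) (sub_pos.mpr h)]
end

section
/- Let two groups under Equalized Odds share TPR, FPR ∈ [0,1] with counts (P_A, N_A), (P_B, N_B) all positive, and suppose TPR + FPR > 1 and P_A/N_A > P_B/N_B. Then the difference in group accuracies equals (TPR + FPR − 1)·(P_A·N_B − P_B·N_A)/((P_A + N_A)·(P_B + N_B)), which is strictly positive. -/
theorem accuracy_disparity_formula
    (TPR FPR PA NA PB NB : ℝ)
    (hTPR : 0 ≤ TPR ∧ TPR ≤ 1) (hFPR : 0 ≤ FPR ∧ FPR ≤ 1)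
    (hPA : 0 < PA) (hNA : 0 < NA) (hPB : 0 < PB) (hNB : 0 < NB)
    (hT : TPR + FPR > 1) (hbase : PA / NA > PB / NB) :
    (TPR * PA + (1 - FPR) * NA) / (PA + NA)
        - (TPR * PB + (1 - FPR) * NB) / (PB + NB)
      = (TPR + FPR - 1) * (PA * NB - PB * NA) / ((PA + NA) * (PB + NB)) ∧
    0 < (TPR + FPR - 1) * (PA * NB - PB * NA) / ((PA + NA) * (PB + NB)) := by
  have hA : (0:ℝ) < PA + NA := by linarith
  have hB : (0:ℝ) < PB + NB := by linarith
  have hnum : 0 < PA * NB - PB * NA := by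
    have := (div_lt_div_iff₀ hNB hNA).mp hbase
    linarith
  constructor
  · field_simp
    ring
  · exact div_pos (mul_pos (by linarith) hnum) (mul_pos hA hB)
end

section
/- Let two groups A and B have counts (P_A, N_A) and (P_B, N_B), all positive, with unequal base rates P_A/N_A ≠ P_B/N_B. Suppose a classifier satisfies both Accuracy Parity and Equalized Odds (shared TPR, FPR ∈ [0,1]). Then its accuracy on both groups equals TPR, and also equals 1 − FPR. -/
lemma mul_add_mul_div_add_cancel {K : Type*} [Field K] (a : K) {P N : K} (hPN : P + N ≠ 0) :
    (a * P + a * N) / (P + N) = a := by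
  rw [← mul_add]
  exact mul_div_cancel_right₀ a hPN

lemma eq_of_mul_add_mul_div_eq {K : Type*} [Field K] {a b P N P' N' : K}
    (hPN : P + N ≠ 0) (hPN' : P' + N' ≠ 0) (hcross : P * N' ≠ P' * N)
    (h : (a * P + b * N) / (P + N) = (a * P' + b * N') / (P' + N')) : a = b := by
  rw [div_eq_div_iff hPN hPN'] at h
  have hprod : (a - b) * (P * N' - P' * N) = 0 := by linear_combination h
  exact sub_eq_zero.mp ((mul_eq_zero.mp hprod).resolve_right (sub_ne_zero.mpr hcross))

theorem unequal_base_rates_force_random_accuracy_general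
    (TPR FPR PA NA PB NB : ℝ)
    (hPA : 0 < PA) (hNA : 0 < NA) (hPB : 0 < PB) (hNB : 0 < NB)
    (hbase : PA / NA ≠ PB / NB)
    (hAP : (TPR * PA + (1 - FPR) * NA) / (PA + NA)
         = (TPR * PB + (1 - FPR) * NB) / (PB + NB)) :
    (TPR * PA + (1 - FPR) * NA) / (PA + NA) = TPR ∧
    (TPR * PB + (1 - FPR) * NB) / (PB + NB) = TPR ∧
    (TPR * PA + (1 - FPR) * NA) / (PA + NA) = 1 - FPR := by
  have hA : PA + NA ≠ 0 := by positivity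
  have hB : PB + NB ≠ 0 := by positivity
  have hcross : PA * NB ≠ PB * NA := (div_eq_div_iff hNA.ne' hNB.ne').not.mp hbase
  have hTPR : TPR = 1 - FPR := eq_of_mul_add_mul_div_eq hA hB hcross hAP
  rw [← hTPR]
  exact ⟨mul_add_mul_div_add_cancel TPR hA, mul_add_mul_div_add_cancel TPR hB,
    mul_add_mul_div_add_cancel TPR hA⟩

theorem unequal_base_rates_force_random_accuracy
    (TPR FPR PA NA PB NB : ℝ)
    (hTPR : 0 ≤ TPR ∧ TPR ≤ 1) (hFPR : 0 ≤ FPR ∧ FPR ≤ 1)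
    (hPA : 0 < PA) (hNA : 0 < NA) (hPB : 0 < PB) (hNB : 0 < NB)
    (hbase : PA / NA ≠ PB / NB)
    (hAP : (TPR * PA + (1 - FPR) * NA) / (PA + NA)
         = (TPR * PB + (1 - FPR) * NB) / (PB + NB)) :
    (TPR * PA + (1 - FPR) * NA) / (PA + NA) = TPR ∧
    (TPR * PB + (1 - FPR) * NB) / (PB + NB) = TPR ∧
    (TPR * PA + (1 - FPR) * NA) / (PA + NA) = 1 - FPR :=
  unequal_base_rates_force_random_accuracy_general TPR FPR PA NA PB NB hPA hNA hPB hNB hbase hAP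
end
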